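/- For integers m ≥ 3 and n ≥ m²/2 − 3, the grid P_{m,n} = {1,…,n} × {1,…,m} can be identified by at most ⌈n/2⌉ + m − 1 disks (allowing half-planes as disks). -/

import Mathlib

noncomputable section

/-- The Euclidean plane. -/
abbrev Pt : Type := EuclideanSpace ℝ (Fin 2)

instance : DecidableEq Pt := Classical.decEq _

/-- A disk: a closed Euclidean ball with nonnegative radius. -/
def IsDisk (D : Set Pt) : Prop :=
  ∃ (c : Pt) (r : ℝ), 0 ≤ r ∧ D = Metric.closedBall c r

/-- A family of disks identifies a finite point set: every point is covered and
every pair of distinct points is separated by some disk. -/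
def Identifies (𝒟 : Finset (Set Pt)) (P : Finset Pt) : Prop :=
  (∀ p ∈ P, ∃ D ∈ 𝒟, p ∈ D) ∧
  (∀ p ∈ P, ∀ q ∈ P, p ≠ q → ∃ D ∈ 𝒟, (p ∈ D ∧ q ∉ D) ∨ (q ∈ D ∧ p ∉ D))

/-- Minimum number of disks needed to identify `P`. -/
def gammaID (P : Finset Pt) : ℕ :=
  sInf {k | ∃ 𝒟 : Finset (Set Pt), 𝒟.card = k ∧ (∀ D ∈ 𝒟, IsDisk D) ∧ Identifies 𝒟 P}

/-- A closed half-plane (allowed as a limiting disk). -/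
def IsHalfPlane (H : Set Pt) : Prop :=
  ∃ (u : Pt) (c : ℝ), ‖u‖ = 1 ∧ H = {p : Pt | (inner ℝ p u : ℝ) ≤ c}

/-- The grid `{1,…,n} × {1,…,m}` embedded in the plane. -/
def gridPts (m n : ℕ) : Finset Pt :=
  (Finset.Icc 1 n ×ˢ Finset.Icc 1 m).image (fun q => (WithLp.toLp 2 ![(q.1 : ℝ), (q.2 : ℝ)] : Pt))

/-!
The `m - 1` half-planes `y ≥ 3/2` and `y ≤ j + 1/2` (`2 ≤ j < m`) cover the grid and separate its
rows. With `N = ⌈n/2⌉`, the disk circumscribing the rectangle `[k+1, k+N] × [1, m]` meets every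
row of the grid exactly in the columns `k+1, …, k+N` as soon as `(m-1)² < 4N`: the neighbouring
columns are at horizontal distance `(N+1)/2` from its centre, and `((N+1)/2)² - ((N-1)/2)² = N`.
The hypothesis `n ≥ m²/2 - 3` gives `(m-1)² < 4N` except when `m = 3`, `n = 2`, where a vertical
half-plane does the job instead. The `N` column blocks `{k+1, …, k+N}`, `k < N`, separate any two
elements of `{1, …, 2N}`.
-/

open Metric

def gridPt (x y : ℕ) : Pt := WithLp.toLp 2 ![(x : ℝ), (y : ℝ)]

theorem gridPts_eq_image (m n : ℕ) :
    gridPts m n = (Finset.Icc 1 n ×ˢ Finset.Icc 1 m).image fun q => gridPt q.1 q.2 :=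
  rfl

@[simp] theorem gridPt_apply_zero (x y : ℕ) : gridPt x y 0 = x := rfl

@[simp] theorem gridPt_apply_one (x y : ℕ) : gridPt x y 1 = y := rfl

theorem natCast_le_add_half_iff {x j : ℕ} : (x : ℝ) ≤ j + 1 / 2 ↔ x ≤ j := by
  constructor
  · intro h
    by_contra! hjx
    have : (j : ℝ) + 1 ≤ x := by exact_mod_cast hjx
    linarith
  · intro h
    have : (x : ℝ) ≤ j := by exact_mod_cast h
    linarith

theorem add_half_le_natCast_iff {x j : ℕ} : (j : ℝ) + 1 / 2 ≤ x ↔ j < x := by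
  constructor
  · intro h
    by_contra! hle
    have : (x : ℝ) ≤ j := by exact_mod_cast hle
    linarith
  · intro h
    have : (j : ℝ) + 1 ≤ x := by exact_mod_cast h
    linarith

theorem identifies_iff {𝒟 : Finset (Set Pt)} {P : Finset Pt} :
    Identifies 𝒟 P ↔ (∀ p ∈ P, ∃ D ∈ 𝒟, p ∈ D) ∧
      ∀ p ∈ P, ∀ q ∈ P, p ≠ q → ∃ D ∈ 𝒟, ¬(p ∈ D ↔ q ∈ D) := by
  simp only [Identifies, ← xor_iff_not_iff]
  rfl

theorem isHalfPlane_setOf_apply_le (i : Fin 2) (c : ℝ) : IsHalfPlane {p : Pt | p i ≤ c} :=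
  ⟨EuclideanSpace.single i 1, c, by simp, by ext p; simp [EuclideanSpace.inner_single_right]⟩

theorem isHalfPlane_setOf_le_apply (i : Fin 2) (c : ℝ) : IsHalfPlane {p : Pt | c ≤ p i} :=
  ⟨-EuclideanSpace.single i 1, -c, by simp, by ext p; simp [EuclideanSpace.inner_single_right]⟩

def lowerHalfPlane (j : ℕ) : Set Pt := {p | p 1 ≤ j + 1 / 2}

def upperHalfPlane (j : ℕ) : Set Pt := {p | j + 1 / 2 ≤ p 1}

theorem gridPt_mem_lowerHalfPlane_iff {x y j : ℕ} : gridPt x y ∈ lowerHalfPlane j ↔ y ≤ j :=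
  natCast_le_add_half_iff

theorem gridPt_mem_upperHalfPlane_iff {x y j : ℕ} : gridPt x y ∈ upperHalfPlane j ↔ j < y :=
  add_half_le_natCast_iff

def rowHalfPlanes (m : ℕ) : Finset (Set Pt) :=
  insert (upperHalfPlane 1) ((Finset.Ico 2 m).image lowerHalfPlane)

theorem card_rowHalfPlanes_le {m : ℕ} (hm : 2 ≤ m) : (rowHalfPlanes m).card ≤ m - 1 := by
  have := (Finset.card_insert_le (upperHalfPlane 1) ((Finset.Ico 2 m).image lowerHalfPlane)).trans
    (Nat.add_le_add_right (Finset.card_image_le.trans (Nat.card_Ico 2 m).le) 1)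
  rw [rowHalfPlanes]
  omega

theorem isHalfPlane_of_mem_rowHalfPlanes {m : ℕ} {H : Set Pt} (hH : H ∈ rowHalfPlanes m) :
    IsHalfPlane H := by
  rcases Finset.mem_insert.1 hH with rfl | hH
  · exact isHalfPlane_setOf_le_apply 1 _
  · obtain ⟨j, -, rfl⟩ := Finset.mem_image.1 hH
    exact isHalfPlane_setOf_apply_le 1 _

theorem lowerHalfPlane_mem_rowHalfPlanes {m j : ℕ} (h₂ : 2 ≤ j) (hm : j < m) :
    lowerHalfPlane j ∈ rowHalfPlanes m :=
  Finset.mem_insert_of_mem (Finset.mem_image_of_mem _ (Finset.mem_Ico.2 ⟨h₂, hm⟩))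

theorem exists_mem_rowHalfPlanes {m x y : ℕ} (hm : 3 ≤ m) :
    ∃ H ∈ rowHalfPlanes m, gridPt x y ∈ H := by
  rcases le_or_gt y 1 with hy | hy
  · exact ⟨_, lowerHalfPlane_mem_rowHalfPlanes (j := m - 1) (by omega) (by omega),
      gridPt_mem_lowerHalfPlane_iff.2 (by omega)⟩
  · exact ⟨_, Finset.mem_insert_self _ _, gridPt_mem_upperHalfPlane_iff.2 hy⟩

theorem exists_separating_rowHalfPlanes {m x₁ y₁ x₂ y₂ : ℕ} (hy₁ : 1 ≤ y₁) (hy₂ : 1 ≤ y₂)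
    (hy₁m : y₁ ≤ m) (hy₂m : y₂ ≤ m) (hne : y₁ ≠ y₂) :
    ∃ H ∈ rowHalfPlanes m, ¬(gridPt x₁ y₁ ∈ H ↔ gridPt x₂ y₂ ∈ H) := by
  by_cases hmin : min y₁ y₂ = 1
  · refine ⟨_, Finset.mem_insert_self _ _, ?_⟩
    rw [gridPt_mem_upperHalfPlane_iff, gridPt_mem_upperHalfPlane_iff]
    omega
  · refine ⟨_, lowerHalfPlane_mem_rowHalfPlanes (j := min y₁ y₂) (by omega) (by omega), ?_⟩
    rw [gridPt_mem_lowerHalfPlane_iff, gridPt_mem_lowerHalfPlane_iff]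
    omega

theorem mem_closedBall_sqrt_iff (p : Pt) (a b : ℝ) {s : ℝ} (hs : 0 ≤ s) :
    p ∈ closedBall (WithLp.toLp 2 ![a, b] : Pt) √s ↔ (p 0 - a) ^ 2 + (p 1 - b) ^ 2 ≤ s := by
  rw [mem_closedBall, EuclideanSpace.dist_eq, Fin.sum_univ_two, Real.sqrt_le_sqrt_iff hs]
  simp [Real.dist_eq, sq_abs]

/-- The disk circumscribing the rectangle `[k+1, k+N] × [1, m]`. -/
def columnDisk (m N k : ℕ) : Set Pt :=
  closedBall (WithLp.toLp 2 ![k + ((N : ℝ) + 1) / 2, ((m : ℝ) + 1) / 2])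
    √((((N : ℝ) - 1) / 2) ^ 2 + (((m : ℝ) - 1) / 2) ^ 2)

theorem isDisk_columnDisk (m N k : ℕ) : IsDisk (columnDisk m N k) :=
  ⟨_, _, Real.sqrt_nonneg _, rfl⟩

theorem gridPt_mem_columnDisk_iff {m N k x y : ℕ} (hmN : ((m : ℝ) - 1) ^ 2 < 4 * N)
    (hy : 1 ≤ y) (hym : y ≤ m) : gridPt x y ∈ columnDisk m N k ↔ k < x ∧ x ≤ k + N := by
  rw [columnDisk, mem_closedBall_sqrt_iff _ _ _ (by positivity), gridPt_apply_zero,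
    gridPt_apply_one]
  have hy₁ : (1 : ℝ) ≤ y := by exact_mod_cast hy
  have hym' : (y : ℝ) ≤ m := by exact_mod_cast hym
  have hrow : ((y : ℝ) - (m + 1) / 2) ^ 2 ≤ (((m : ℝ) - 1) / 2) ^ 2 :=
    sq_le_sq' (by linarith) (by linarith)
  constructor
  · intro hmem
    by_contra hout
    have hfar : (((N : ℝ) + 1) / 2) ^ 2 ≤ ((x : ℝ) - (k + ((N : ℝ) + 1) / 2)) ^ 2 := by
      rcases (not_and_or.1 hout) with hxk | hxk
      · have : (x : ℝ) ≤ k := by exact_mod_cast not_lt.1 hxk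
        nlinarith
      · have : (k : ℝ) + N + 1 ≤ x := by exact_mod_cast (not_le.1 hxk)
        nlinarith
    nlinarith [sq_nonneg ((y : ℝ) - (m + 1) / 2)]
  · rintro ⟨hkx, hxN⟩
    have hkx' : (k : ℝ) + 1 ≤ x := by exact_mod_cast hkx
    have hxN' : (x : ℝ) ≤ k + N := by exact_mod_cast hxN
    have hcol : ((x : ℝ) - (k + ((N : ℝ) + 1) / 2)) ^ 2 ≤ (((N : ℝ) - 1) / 2) ^ 2 :=
      sq_le_sq' (by linarith) (by linarith)
    linarith

def ColumnWindows (m N : ℕ) (S : ℕ → Set Pt) : Prop :=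
  ∀ k < N, ∀ x y, 1 ≤ x → 1 ≤ y → y ≤ m → (gridPt x y ∈ S k ↔ k < x ∧ x ≤ k + N)

theorem exists_window_separating {N x₁ x₂ : ℕ} (h₁ : 1 ≤ x₁) (h₂ : 1 ≤ x₂) (h₁N : x₁ ≤ 2 * N)
    (h₂N : x₂ ≤ 2 * N) (hne : x₁ ≠ x₂) :
    ∃ k < N, ¬((k < x₁ ∧ x₁ ≤ k + N) ↔ (k < x₂ ∧ x₂ ≤ k + N)) := by
  wlog hlt : x₁ < x₂ generalizing x₁ x₂
  · obtain ⟨k, hk, hsep⟩ := this h₂ h₁ h₂N h₁N hne.symm (by omega)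
    exact ⟨k, hk, fun h => hsep h.symm⟩
  by_cases hfar : x₁ + N < x₂
  · exact ⟨x₁ - 1, by omega, by omega⟩
  by_cases hx₁ : x₁ < N
  · exact ⟨x₁, hx₁, by omega⟩
  · exact ⟨x₁ - N, by omega, by omega⟩

/-- When `m = 3` and `N = 1` the column next to the block lies on the boundary of
`columnDisk 3 1 0`, so a vertical half-plane is used instead. -/
theorem exists_columnWindows {m N : ℕ} (h : ((m : ℝ) - 1) ^ 2 < 4 * N ∨ N = 1) :
    ∃ S : ℕ → Set Pt, (∀ k, IsDisk (S k) ∨ IsHalfPlane (S k)) ∧ ColumnWindows m N S := by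
  rcases h with hmN | rfl
  · exact ⟨columnDisk m N, fun k => .inl (isDisk_columnDisk m N k),
      fun k _ x y _ hy hym => gridPt_mem_columnDisk_iff hmN hy hym⟩
  · refine ⟨fun _ => {p : Pt | p 0 ≤ (1 : ℕ) + 1 / 2}, fun _ => .inr (isHalfPlane_setOf_apply_le _ _),
      fun k hk x y hx _ _ => ?_⟩
    obtain rfl : k = 0 := by omega
    change (x : ℝ) ≤ (1 : ℕ) + 1 / 2 ↔ _
    rw [natCast_le_add_half_iff]
    omega

section GridFamily

def gridFamily (m N : ℕ) (S : ℕ → Set Pt) : Finset (Set Pt) :=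
  (Finset.range N).image S ∪ rowHalfPlanes m

variable {m N : ℕ} {S : ℕ → Set Pt}

theorem card_gridFamily_le (hm : 2 ≤ m) : (gridFamily m N S).card ≤ N + (m - 1) :=
  (Finset.card_union_le _ _).trans <| add_le_add
    (Finset.card_image_le.trans (Finset.card_range N).le) (card_rowHalfPlanes_le hm)

theorem isDisk_or_isHalfPlane_of_mem_gridFamily (hS : ∀ k, IsDisk (S k) ∨ IsHalfPlane (S k))
    {D : Set Pt} (hD : D ∈ gridFamily m N S) : IsDisk D ∨ IsHalfPlane D := by
  rcases Finset.mem_union.1 hD with hD | hD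
  · obtain ⟨k, -, rfl⟩ := Finset.mem_image.1 hD
    exact hS k
  · exact .inr (isHalfPlane_of_mem_rowHalfPlanes hD)

theorem identifies_gridFamily {n : ℕ} (hm : 3 ≤ m) (hnN : n ≤ 2 * N) (hS : ColumnWindows m N S) :
    Identifies (gridFamily m N S) (gridPts m n) := by
  simp only [identifies_iff, gridPts_eq_image, Finset.forall_mem_image, Finset.mem_product,
    Finset.mem_Icc, Prod.forall]
  refine ⟨fun x y _ => ?_, fun x₁ y₁ ⟨hx₁, hy₁⟩ x₂ y₂ ⟨hx₂, hy₂⟩ hne => ?_⟩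
  · obtain ⟨H, hH, hmem⟩ := exists_mem_rowHalfPlanes (x := x) (y := y) hm
    exact ⟨H, Finset.mem_union_right _ hH, hmem⟩
  by_cases hy : y₁ = y₂
  · subst hy
    have hx : x₁ ≠ x₂ := by rintro rfl; exact hne rfl
    obtain ⟨k, hk, hsep⟩ := exists_window_separating hx₁.1 hx₂.1 (hx₁.2.trans hnN)
      (hx₂.2.trans hnN) hx
    refine ⟨S k, Finset.mem_union_left _ (Finset.mem_image_of_mem _ (Finset.mem_range.2 hk)), ?_⟩
    rwa [hS k hk _ _ hx₁.1 hy₁.1 hy₁.2, hS k hk _ _ hx₂.1 hy₁.1 hy₁.2]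
  · obtain ⟨H, hH, hsep⟩ := exists_separating_rowHalfPlanes hy₁.1 hy₂.1 hy₁.2 hy₂.2 hy
    exact ⟨H, Finset.mem_union_right _ hH, hsep⟩

end GridFamily

theorem sub_one_sq_lt_or_half_eq_one {m n : ℕ} (hm : 3 ≤ m) (hn : (m : ℝ) ^ 2 / 2 - 3 ≤ n) :
    ((m : ℝ) - 1) ^ 2 < 4 * ((n + 1) / 2 : ℕ) ∨ (n + 1) / 2 = 1 := by
  have hN : (n : ℝ) ≤ 2 * ((n + 1) / 2 : ℕ) := by exact_mod_cast (by omega : n ≤ 2 * ((n + 1) / 2))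
  rcases (by omega : m = 3 ∨ 4 ≤ m) with rfl | hm4
  · by_cases hn2 : n ≤ 2
    · right
      have : (1 : ℝ) < n := by norm_num at hn; linarith
      have : 1 < n := by exact_mod_cast this
      omega
    · left
      have : (3 : ℝ) ≤ n := by exact_mod_cast (by omega : 3 ≤ n)
      push_cast
      linarith
  · left
    have : (4 : ℝ) ≤ m := by exact_mod_cast hm4
    nlinarith

/-- For `m ≥ 3` and `n ≥ m²/2 - 3`, the grid can be identified by at most
`⌈n/2⌉ + m - 1` disks or half-planes. -/
theorem grid_wide_upper_bound (m n : ℕ) (hm : 3 ≤ m) (hn : (m : ℝ) ^ 2 / 2 - 3 ≤ (n : ℝ)) :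
    ∃ 𝒟 : Finset (Set Pt), (∀ D ∈ 𝒟, IsDisk D ∨ IsHalfPlane D) ∧
      Identifies 𝒟 (gridPts m n) ∧ 𝒟.card ≤ (n + 1) / 2 + m - 1 := by
  obtain ⟨S, hS_shape, hS⟩ := exists_columnWindows (sub_one_sq_lt_or_half_eq_one hm hn)
  refine ⟨gridFamily m ((n + 1) / 2) S, fun _ => isDisk_or_isHalfPlane_of_mem_gridFamily hS_shape,
    identifies_gridFamily hm (by omega) hS, ?_⟩
  have := card_gridFamily_le (N := (n + 1) / 2) (S := S) (by omega : 2 ≤ m)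
  omega
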